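/- arXiv:1108.3351 — 2 statements merged into one kernel-verified Lean document; each statement's English description precedes it below -/
import Mathlib

section
/- Let θ : V(D₂) → V(D) be a compression map of reflexive directed graphs. If x ∈ V(D₂) is a locked clasp, then θ(x) is a locked clasp in D. -/
def Reflexive' {V : Type*} (A : V → V → Prop) : Prop := ∀ v, A v v

def Transitive' {V : Type*} (A : V → V → Prop) : Prop :=
  ∀ x y z, A x y → A y z → A x z

def Preordered {V : Type*} (A : V → V → Prop) : Prop :=
  Reflexive' A ∧ Transitive' A

def BalancedGraph {V : Type*} (A : V → V → Prop) : Prop :=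
  ∀ w x y z, A w x → A x y → A y z → A w z → (A w y ↔ A x z)

def Stable {V : Type*} (A : V → V → Prop) : Prop :=
  BalancedGraph A ∧ ∀ a b c d : V, a ≠ b → a ≠ c → a ≠ d → b ≠ c → b ≠ d → c ≠ d →
    A a b → A a c → A b c → A b d → A c d → A a d

def TransTriple {V : Type*} (A : V → V → Prop) (a b c : V) : Prop :=
  A a b ∧ A b c ∧ A a c

def IsClasp {V : Type*} (A : V → V → Prop) (x : V) : Prop :=
  ∃ w y, w ≠ x ∧ y ≠ x ∧ A w x ∧ A x y ∧ ¬ A w y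

def IsLockedClasp {V : Type*} (A : V → V → Prop) (x : V) : Prop :=
  ∃ u v w y, u ≠ x ∧ v ≠ x ∧ w ≠ x ∧ y ≠ x ∧
    TransTriple A u x y ∧ TransTriple A u x v ∧ TransTriple A w x v ∧ ¬ A w y

def Soloist {V : Type*} (A : V → V → Prop) (s : V) : Prop :=
  ∀ r, r ≠ s → ¬ (A r s ∧ A s r)

/-- A compression map between (reflexive) directed graphs, given by arrow
relations `A₂` on `V₂` and `A₁` on `V₁`: a surjection preserving arrows,
lifting transitive triples, and inducing a bijection between the arrows
between distinct vertices. -/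
def IsCompression {V₂ V₁ : Type*} (A₂ : V₂ → V₂ → Prop) (A₁ : V₁ → V₁ → Prop)
    (θ : V₂ → V₁) : Prop :=
  Function.Surjective θ ∧
  (∀ x y, A₂ x y → A₁ (θ x) (θ y)) ∧
  (∀ a b c, TransTriple A₁ a b c →
    ∃ x y z, TransTriple A₂ x y z ∧ θ x = a ∧ θ y = b ∧ θ z = c) ∧
  (∀ x y, x ≠ y → A₂ x y → θ x ≠ θ y) ∧
  (∀ x y x' y', x ≠ y → x' ≠ y' → A₂ x y → A₂ x' y' →
    θ x = θ x' → θ y = θ y' → x = x' ∧ y = y') ∧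
  (∀ a b, a ≠ b → A₁ a b → ∃ x y, x ≠ y ∧ A₂ x y ∧ θ x = a ∧ θ y = b)

/-!
A compression map sends arrows between distinct vertices to arrows between distinct vertices,
so the four transitive triples witnessing that `x` is a locked clasp map to such triples at `θ x`.
The missing arrow survives as well: if `θ w → θ y` were an arrow, the transitive triple
`(θ w, θ x, θ y)` would lift to a triple `(a, b, c)` of `D₂`, and injectivity on arrows forces
`(a, b) = (w, x)` and `(b, c) = (x, y)`, giving the arrow `w → y`.
-/

namespace IsCompression

variable {V₂ V : Type*} {A₂ : V₂ → V₂ → Prop} {A : V → V → Prop} {θ : V₂ → V}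

theorem map_adj (hθ : IsCompression A₂ A θ) {x y : V₂} (h : A₂ x y) : A (θ x) (θ y) :=
  hθ.2.1 x y h

theorem map_ne (hθ : IsCompression A₂ A θ) {x y : V₂} (hne : x ≠ y) (h : A₂ x y) :
    θ x ≠ θ y :=
  hθ.2.2.2.1 x y hne h

theorem map_transTriple (hθ : IsCompression A₂ A θ) {a b c : V₂} (h : TransTriple A₂ a b c) :
    TransTriple A (θ a) (θ b) (θ c) :=
  ⟨hθ.map_adj h.1, hθ.map_adj h.2.1, hθ.map_adj h.2.2⟩

theorem exists_lift_transTriple (hθ : IsCompression A₂ A θ) {a b c : V}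
    (h : TransTriple A a b c) : ∃ x y z, TransTriple A₂ x y z ∧ θ x = a ∧ θ y = b ∧ θ z = c :=
  hθ.2.2.1 a b c h

theorem eq_of_map_eq (hθ : IsCompression A₂ A θ) {x y x' y' : V₂} (hxy : x ≠ y)
    (hxy' : x' ≠ y') (h : A₂ x y) (h' : A₂ x' y') (hx : θ x = θ x') (hy : θ y = θ y') :
    x = x' ∧ y = y' :=
  hθ.2.2.2.2.1 x y x' y' hxy hxy' h h' hx hy

theorem adj_of_map_adj (hθ : IsCompression A₂ A θ) {w x y : V₂} (hwx : w ≠ x) (hxy : x ≠ y)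
    (hw : A₂ w x) (hy : A₂ x y) (hA : A (θ w) (θ y)) : A₂ w y := by
  obtain ⟨a, b, c, ⟨hab, hbc, hac⟩, ha, hb, hc⟩ :=
    hθ.exists_lift_transTriple ⟨hθ.map_adj hw, hθ.map_adj hy, hA⟩
  have hab_ne : a ≠ b := fun h => hθ.map_ne hwx hw (ha ▸ hb ▸ congrArg θ h)
  have hbc_ne : b ≠ c := fun h => hθ.map_ne hxy hy (hb ▸ hc ▸ congrArg θ h)
  obtain ⟨rfl, rfl⟩ := hθ.eq_of_map_eq hab_ne hwx hab hw ha hb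
  obtain ⟨-, rfl⟩ := hθ.eq_of_map_eq hbc_ne hxy hbc hy hb hc
  exact hac

end IsCompression

theorem stmt11_general {V₂ V : Type*} (A₂ : V₂ → V₂ → Prop) (A : V → V → Prop)
    (θ : V₂ → V)
    (hθ : IsCompression A₂ A θ) (x : V₂) (hx : IsLockedClasp A₂ x) :
    IsLockedClasp A (θ x) := by
  obtain ⟨u, v, w, y, hu, hv, hw, hy, huxy, huxv, hwxv, hwy⟩ := hx
  exact ⟨θ u, θ v, θ w, θ y,
    hθ.map_ne hu huxy.1, (hθ.map_ne (Ne.symm hv) huxv.2.1).symm,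
    hθ.map_ne hw hwxv.1, (hθ.map_ne (Ne.symm hy) huxy.2.1).symm,
    hθ.map_transTriple huxy, hθ.map_transTriple huxv, hθ.map_transTriple hwxv,
    fun hA => hwy (hθ.adj_of_map_adj hw (Ne.symm hy) hwxv.1 huxy.2.1 hA)⟩

theorem stmt11 {V₂ V : Type*} (A₂ : V₂ → V₂ → Prop) (A : V → V → Prop)
    (θ : V₂ → V) (h₂ : Reflexive' A₂) (h₁ : Reflexive' A)
    (hθ : IsCompression A₂ A θ) (x : V₂) (hx : IsLockedClasp A₂ x) :
    IsLockedClasp A (θ x) :=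
  stmt11_general A₂ A θ hθ x hx
end

section
/- If a reflexive directed graph D contains a locked clasp, then D is not the compression of any preordered directed graph; i.e., there is no compression map θ : V(D₂) → V(D) with D₂ preordered. -/
namespace IsCompression

variable {V₂ V : Type*} {A₂ : V₂ → V₂ → Prop} {A : V → V → Prop} {θ : V₂ → V}

theorem map_arrow (hθ : IsCompression A₂ A θ) {a b : V₂} (h : A₂ a b) : A (θ a) (θ b) :=
  hθ.2.1 a b h

theorem arrow_eq_of_map_eq (hθ : IsCompression A₂ A θ) {a b a' b' : V₂} (hab : A₂ a b)
    (hab' : A₂ a' b') (ha : θ a = θ a') (hb : θ b = θ b') (hne : θ a ≠ θ b) :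
    a = a' ∧ b = b' :=
  hθ.2.2.2.2.1 a b a' b' (ne_of_apply_ne θ hne) (ne_of_apply_ne θ (ha ▸ hb ▸ hne)) hab hab' ha hb

/-- The arrows `ux` and `xv` have unique lifts, so lifts of the triples `(u,x,y)`, `(u,x,v)`,
`(w,x,v)` share their middle vertex; transitivity upstairs then yields an arrow over `wy`. -/
theorem not_isLockedClasp (hθ : IsCompression A₂ A θ) (htrans : Transitive' A₂) (x : V) :
    ¬ IsLockedClasp A x := by
  rintro ⟨u, v, w, y, hux, hvx, -, -, huxy, huxv, hwxv, hwy⟩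
  obtain ⟨u₁, x₁, y₁, ⟨hux₁, hxy₁, -⟩, rfl, rfl, rfl⟩ := hθ.exists_lift_transTriple huxy
  obtain ⟨u₂, x₂, v₂, ⟨hux₂, hxv₂, -⟩, hu₂, hx₂, rfl⟩ := hθ.exists_lift_transTriple huxv
  obtain ⟨w₃, x₃, v₃, ⟨hwx₃, hxv₃, -⟩, rfl, hx₃, hv₃⟩ := hθ.exists_lift_transTriple hwxv
  obtain ⟨-, rfl⟩ := hθ.arrow_eq_of_map_eq hux₁ hux₂ hu₂.symm hx₂.symm hux
  obtain ⟨rfl, -⟩ := hθ.arrow_eq_of_map_eq hxv₂ hxv₃ hx₃.symm hv₃.symm (Ne.symm hvx)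
  exact hwy (hθ.map_arrow (htrans _ _ _ hwx₃ hxy₁))

end IsCompression

theorem stmt13_general {V : Type*} (A : V → V → Prop)
    (hx : ∃ x : V, IsLockedClasp A x) :
    ∀ (V₂ : Type*) (A₂ : V₂ → V₂ → Prop) (θ : V₂ → V),
      Preordered A₂ → ¬ IsCompression A₂ A θ := by
  obtain ⟨x, hx⟩ := hx
  intro V₂ A₂ θ hpre hθ
  exact hθ.not_isLockedClasp hpre.2 x hx

theorem stmt13 {V : Type*} (A : V → V → Prop) (hr : Reflexive' A)
    (hx : ∃ x : V, IsLockedClasp A x) :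
    ∀ (V₂ : Type*) (A₂ : V₂ → V₂ → Prop) (θ : V₂ → V),
      Preordered A₂ → ¬ IsCompression A₂ A θ :=
  stmt13_general A hx
end
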